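/- For α > 0 with α(1+1/c) > 1/c and α(k+1) > α(1+1/c) - 1/c, the integral of the α-th power of the positive part of the ESBIII density satisfies ∫₀^∞ f(x)^α dx = (1+ε)(ck/2)^α Γ(α(k+1) - α(1+1/c) + 1/c) Γ(α(1+1/c) - 1/c) / (c Γ(α(k+1))). -/

import Mathlib

open Real

open Set MeasureTheory ProbabilityTheory

/-!
The substitution `x = (1 + ε) y` pulls out the factor `1 + ε`, and `u = y ^ (-c)` turns `f ^ α`
into `c⁻¹ (ck/2) ^ α u ^ (a - 1) (1 + u) ^ (-(a + b))` with `a = α (1 + 1/c) - 1/c` and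
`a + b = α (k + 1)`. This is a Beta integral of the second kind, which `t = u / (1 + u)` reduces
to `B(a, b) = Γ(a) Γ(b) / Γ(a + b)`.
-/

theorem intervalIntegral_rpow_mul_one_sub_rpow {a b : ℝ} (ha : 0 < a) (hb : 0 < b) :
    ∫ t in (0 : ℝ)..1, t ^ (a - 1) * (1 - t) ^ (b - 1) = beta a b := by
  have hcast : ((∫ t in (0 : ℝ)..1, t ^ (a - 1) * (1 - t) ^ (b - 1) : ℝ) : ℂ) =
      Complex.betaIntegral a b := by
    rw [Complex.betaIntegral, ← intervalIntegral.integral_ofReal]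
    refine intervalIntegral.integral_congr fun t ht => ?_
    rw [uIcc_of_le zero_le_one] at ht
    rw [Complex.ofReal_mul, Complex.ofReal_cpow ht.1, Complex.ofReal_cpow (by linarith [ht.2])]
    push_cast
    ring
  rw [beta_eq_betaIntegralReal a b ha hb, ← hcast, Complex.ofReal_re]

theorem integral_Ioi_smul_comp_div_one_add {E : Type*} [NormedAddCommGroup E] [NormedSpace ℝ E]
    (g : ℝ → E) :
    ∫ u in Ioi (0 : ℝ), ((1 + u) ^ 2)⁻¹ • g (u / (1 + u)) = ∫ t in Ioo (0 : ℝ) 1, g t := by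
  have himage : (fun u : ℝ => u / (1 + u)) '' Ioi 0 = Ioo 0 1 := by
    ext t
    constructor
    · rintro ⟨u, hu : 0 < u, rfl⟩
      exact ⟨by positivity, (div_lt_one (by positivity)).2 (by linarith)⟩
    · rintro ⟨ht0, ht1⟩
      refine ⟨t / (1 - t), div_pos ht0 (by linarith), ?_⟩
      field_simp [(by linarith : (1 : ℝ) - t ≠ 0)]
      ring
  have hderiv : ∀ u ∈ Ioi (0 : ℝ),
      HasDerivWithinAt (fun u : ℝ => u / (1 + u)) ((1 + u) ^ 2)⁻¹ (Ioi 0) u := by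
    intro u (hu : 0 < u)
    refine (((hasDerivAt_id' u).div ((hasDerivAt_id' u).const_add 1)
      (by positivity)).congr_deriv ?_).hasDerivWithinAt
    field_simp
    ring
  have hinj : InjOn (fun u : ℝ => u / (1 + u)) (Ioi 0) := by
    intro u (hu : 0 < u) v (hv : 0 < v) h
    field_simp at h
    linarith
  rw [← himage, integral_image_eq_integral_abs_deriv_smul measurableSet_Ioi hderiv hinj]
  refine setIntegral_congr_fun measurableSet_Ioi fun u (hu : 0 < u) => ?_
  rw [abs_of_pos (by positivity)]

theorem integral_Ioi_rpow_mul_one_add_rpow_neg {a b : ℝ} (ha : 0 < a) (hb : 0 < b) :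
    ∫ u in Ioi (0 : ℝ), u ^ (a - 1) * (1 + u) ^ (-(a + b)) = beta a b := by
  rw [← intervalIntegral_rpow_mul_one_sub_rpow ha hb, intervalIntegral.integral_of_le zero_le_one,
    integral_Ioc_eq_integral_Ioo, ← integral_Ioi_smul_comp_div_one_add]
  refine setIntegral_congr_fun measurableSet_Ioi fun u (hu : 0 < u) => ?_
  have h1u : (0 : ℝ) < 1 + u := by linarith
  have hsub : 1 - u / (1 + u) = (1 + u)⁻¹ := by field_simp; ring
  rw [smul_eq_mul, hsub, div_rpow hu.le h1u.le, inv_rpow h1u.le, ← rpow_neg h1u.le,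
    show -(a + b) = -2 + -(a - 1) + -(b - 1) by ring, rpow_add h1u, rpow_add h1u,
    rpow_neg h1u.le 2, rpow_neg h1u.le (a - 1), rpow_two]
  field_simp

theorem integral_Ioi_rpow_mul_one_add_rpow_rpow {p : ℝ} (hp : p ≠ 0) (s t : ℝ) :
    ∫ y in Ioi (0 : ℝ), y ^ s * (1 + y ^ p) ^ t =
      |p|⁻¹ * ∫ u in Ioi (0 : ℝ), u ^ ((s + 1) / p - 1) * (1 + u) ^ t := by
  rw [← integral_comp_rpow_Ioi (fun u => u ^ ((s + 1) / p - 1) * (1 + u) ^ t) hp,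
    ← integral_const_mul]
  refine setIntegral_congr_fun measurableSet_Ioi fun y (hy : 0 < y) => ?_
  have hpow : y ^ (p - 1) * (y ^ p) ^ ((s + 1) / p - 1) = y ^ s := by
    rw [← rpow_mul hy.le, ← rpow_add hy]
    congr 1
    field_simp
    ring
  rw [smul_eq_mul, ← hpow]
  field_simp [abs_ne_zero.2 hp]

theorem integral_Ioi_comp_div {E : Type*} [NormedAddCommGroup E] [NormedSpace ℝ E]
    (g : ℝ → E) {s : ℝ} (hs : 0 < s) :
    ∫ x in Ioi (0 : ℝ), g (x / s) = s • ∫ y in Ioi (0 : ℝ), g y := by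
  simp_rw [div_eq_inv_mul]
  rw [integral_comp_mul_left_Ioi g 0 (inv_pos.2 hs), inv_inv, mul_zero]

theorem esbiii_renyi_pos (c k ε α : ℝ) (hc : 0 < c) (hk : 0 < k)
    (hε : ε ∈ Set.Ioo (-1 : ℝ) 1)
    (h1 : 1 / c < α * (1 + 1 / c)) (h2 : α * (1 + 1 / c) - 1 / c < α * (k + 1)) :
    ∫ x in Set.Ioi (0 : ℝ),
        ((c * k / 2) * (x / (1 + ε)) ^ (-(c + 1)) *
          (1 + (x / (1 + ε)) ^ (-c)) ^ (-(k + 1))) ^ α =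
      (1 + ε) * (c * k / 2) ^ α *
        Real.Gamma (α * (k + 1) - α * (1 + 1 / c) + 1 / c) *
        Real.Gamma (α * (1 + 1 / c) - 1 / c) / (c * Real.Gamma (α * (k + 1))) := by
  set a := α * (1 + 1 / c) - 1 / c
  set b := α * (k + 1) - α * (1 + 1 / c) + 1 / c
  have ha : 0 < a := by linarith
  have hb : 0 < b := by linarith
  have hab : a + b = α * (k + 1) := by ring
  have hε0 : 0 < 1 + ε := by linarith [hε.1]
  have hC : 0 < c * k / 2 := by positivity
  have hdensity : ∀ y : ℝ, 0 < y →
      ((c * k / 2) * y ^ (-(c + 1)) * (1 + y ^ (-c)) ^ (-(k + 1))) ^ α =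
        (c * k / 2) ^ α * (y ^ (-(c + 1) * α) * (1 + y ^ (-c)) ^ (-(k + 1) * α)) := by
    intro y hy
    rw [mul_rpow (by positivity) (by positivity), mul_rpow hC.le (by positivity),
      rpow_mul hy.le, rpow_mul (by positivity), mul_assoc]
  have hexp : (-(c + 1) * α + 1) / -c - 1 = a - 1 := by simp only [a]; field_simp; ring
  have hexp' : -(k + 1) * α = -(a + b) := by rw [hab]; ring
  calc _ = (c * k / 2) ^ α * ∫ x in Ioi (0 : ℝ), (x / (1 + ε)) ^ (-(c + 1) * α) *
          (1 + (x / (1 + ε)) ^ (-c)) ^ (-(k + 1) * α) := by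
        rw [← integral_const_mul]
        exact setIntegral_congr_fun measurableSet_Ioi fun x (hx : 0 < x) =>
          hdensity _ (div_pos hx hε0)
    _ = (c * k / 2) ^ α * ((1 + ε) * (c⁻¹ *
          ∫ u in Ioi (0 : ℝ), u ^ (a - 1) * (1 + u) ^ (-(a + b)))) := by
        rw [integral_Ioi_comp_div (fun y => y ^ (-(c + 1) * α) * (1 + y ^ (-c)) ^ (-(k + 1) * α))
          hε0, integral_Ioi_rpow_mul_one_add_rpow_rpow (neg_ne_zero.2 hc.ne'), hexp, hexp',
          abs_neg, abs_of_pos hc, smul_eq_mul]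
    _ = _ := by
        rw [integral_Ioi_rpow_mul_one_add_rpow_neg ha hb, beta, hab]
        have := (Gamma_pos_of_pos (hab ▸ add_pos ha hb)).ne'
        field_simp
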